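/- arXiv:cs/0612070 — 3 statements merged into one kernel-verified Lean document; each statement's English description precedes it below -/
import Mathlib

section
/- In the 3-peg Hanoi variant with distance constraint C = 1, any legal sequence of moves transferring all n discs from the standard state on one peg to the standard state on another peg has length at least b(n), where b(0)=0, b(1)=1, b(n)=2·b(n-2)+2. -/
/-- A legal move in the distance-1 Hanoi model: exactly one disc `d` changes peg, no smaller
disc is on `d`'s source or target peg, and moreover `d` may only be placed on an empty peg or
directly on the disc one size larger (`d+1`). -/
def DMove {n : ℕ} (X Y : Fin n → Fin 3) : Prop :=
  ∃ d : Fin n, X d ≠ Y d ∧ (∀ e, e ≠ d → Y e = X e) ∧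
    (∀ e, e < d → X e ≠ X d ∧ X e ≠ Y d) ∧
    ((∃ e, e ≠ d ∧ X e = Y d) → ∃ e : Fin n, (e : ℕ) = (d : ℕ) + 1 ∧ X e = Y d)

/-- Length of the recursive move sequence ζₙ in the distance-1 Hanoi model. -/
def bseq : ℕ → ℕ
  | 0 => 0
  | 1 => 1
  | (n + 2) => 2 * bseq n + 2

/-- On `Fin 3` there is a unique value distinct from two given distinct values. -/
lemma third_eq : ∀ (p q x y : Fin 3), p ≠ q → x ≠ p → x ≠ q → y ≠ p → y ≠ q → x = y := by
  decide

/-- Number of genuine moves of the sequence `f` on the interval `[a, b)`. -/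
def movesIn {n : ℕ} (f : ℕ → Fin n → Fin 3) (a b : ℕ) : ℕ :=
  ((Finset.Ico a b).filter (fun i => f (i + 1) ≠ f i)).card

lemma movesIn_add {n : ℕ} (f : ℕ → Fin n → Fin 3) {a c b : ℕ} (h1 : a ≤ c) (h2 : c ≤ b) :
    movesIn f a b = movesIn f a c + movesIn f c b := by
  unfold movesIn
  rw [← Finset.Ico_union_Ico_eq_Ico h1 h2, Finset.filter_union,
    Finset.card_union_of_disjoint
      (Finset.disjoint_filter_filter (Finset.Ico_disjoint_Ico_consecutive a c b))]

lemma movesIn_le {n : ℕ} (f : ℕ → Fin n → Fin 3) (a b : ℕ) : movesIn f a b ≤ b - a := by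
  unfold movesIn
  calc ((Finset.Ico a b).filter _).card ≤ (Finset.Ico a b).card := Finset.card_filter_le _ _
    _ = b - a := Nat.card_Ico a b

lemma movesIn_one {n : ℕ} (f : ℕ → Fin n → Fin 3) (i : ℕ) (h : f (i + 1) ≠ f i) :
    1 ≤ movesIn f i (i + 1) := by
  unfold movesIn
  rw [Nat.Ico_succ_singleton]
  simp [Finset.filter_singleton, h]

lemma restrict_filter_subset {n k : ℕ} (hk : k ≤ n) (f : ℕ → Fin n → Fin 3) (a b : ℕ) :
    ((Finset.Ico a b).filter
      (fun i => (fun e : Fin k => f (i + 1) (Fin.castLE hk e)) ≠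
        (fun e : Fin k => f i (Fin.castLE hk e)))) ⊆
    ((Finset.Ico a b).filter (fun i => f (i + 1) ≠ f i)) := by
  intro i hi
  rw [Finset.mem_filter] at hi ⊢
  refine ⟨hi.1, fun hc => hi.2 ?_⟩
  funext e
  rw [hc]

lemma movesIn_restrict_le {n k : ℕ} (hk : k ≤ n) (f : ℕ → Fin n → Fin 3) (a b : ℕ) :
    movesIn (fun i (e : Fin k) => f i (Fin.castLE hk e)) a b ≤ movesIn f a b :=
  Finset.card_le_card (restrict_filter_subset hk f a b)

/-- A legal move restricted to the `k` smallest discs is either no move or a legal move. -/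
lemma DMove.restrict {n k : ℕ} (hk : k ≤ n) {X Y : Fin n → Fin 3} (h : DMove X Y) :
    (fun e : Fin k => Y (Fin.castLE hk e)) = (fun e : Fin k => X (Fin.castLE hk e)) ∨
    DMove (fun e : Fin k => X (Fin.castLE hk e)) (fun e : Fin k => Y (Fin.castLE hk e)) := by
  obtain ⟨d, hXY, hoth, hsm, hpl⟩ := h
  by_cases hdk : (d : ℕ) < k
  · right
    have hcd : Fin.castLE hk ⟨(d : ℕ), hdk⟩ = d := by ext; simp
    refine ⟨⟨(d : ℕ), hdk⟩, ?_, ?_, ?_, ?_⟩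
    · simpa [hcd] using hXY
    · intro e he
      apply hoth
      intro hc
      apply he
      ext
      have : ((Fin.castLE hk e : Fin n) : ℕ) = ((d : Fin n) : ℕ) := by rw [hc]
      simpa using this
    · intro e he
      have hlt : Fin.castLE hk e < d := by
        rw [Fin.lt_def] at he ⊢
        simpa using he
      have h3 := hsm _ hlt
      simpa [hcd] using h3
    · rintro ⟨e, he, heq⟩
      have hce : Fin.castLE hk e ≠ d := by
        intro hc
        apply he
        ext
        have : ((Fin.castLE hk e : Fin n) : ℕ) = ((d : Fin n) : ℕ) := by rw [hc]
        simpa using this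
      have heq' : X (Fin.castLE hk e) = Y d := by simpa [hcd] using heq
      obtain ⟨e', he'1, he'2⟩ := hpl ⟨Fin.castLE hk e, hce, heq'⟩
      by_cases h1 : (d : ℕ) + 1 < k
      · refine ⟨⟨(d : ℕ) + 1, h1⟩, by simp, ?_⟩
        have hce' : Fin.castLE hk ⟨(d : ℕ) + 1, h1⟩ = e' := by
          ext
          simp [he'1]
        show X (Fin.castLE hk ⟨(d : ℕ) + 1, h1⟩) = Y (Fin.castLE hk ⟨(d : ℕ), hdk⟩)
        rw [hce', he'2, hcd]
      · exfalso
        have hek : (e : ℕ) < k := e.isLt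
        have hlt : Fin.castLE hk e < d := by
          rw [Fin.lt_def]
          simp only [Fin.coe_castLE]
          have : (e : ℕ) ≠ (d : ℕ) := by
            intro hc
            apply he
            ext
            simp [hc]
          omega
        exact (hsm _ hlt).2 heq'
  · left
    funext e
    apply hoth
    intro hc
    have : ((Fin.castLE hk e : Fin n) : ℕ) = ((d : Fin n) : ℕ) := by rw [hc]
    simp only [Fin.coe_castLE] at this
    omega

lemma exists_first_change {α : Type*} (g : ℕ → α) (a b : ℕ) (hab : a ≤ b) (h : g a ≠ g b) :
    ∃ i, a ≤ i ∧ i < b ∧ (∀ k, a ≤ k → k ≤ i → g k = g a) ∧ g (i + 1) ≠ g i := by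
  classical
  have hlt : a < b := lt_of_le_of_ne hab (by rintro rfl; exact h rfl)
  have hex : ∃ i, g (a + i + 1) ≠ g a := by
    refine ⟨b - a - 1, ?_⟩
    rw [show a + (b - a - 1) + 1 = b by omega]
    exact fun hc => h hc.symm
  let i0 := Nat.find hex
  have hi0 : g (a + i0 + 1) ≠ g a := Nat.find_spec hex
  have hmin : ∀ k, k < i0 → g (a + k + 1) = g a := fun k hk => not_not.mp (Nat.find_min hex hk)
  have hconst : ∀ k, k ≤ i0 → g (a + k) = g a := by
    intro k hk
    cases k with
    | zero => simp
    | succ k' => exact hmin k' (by omega)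
  have hib : a + i0 < b := by
    by_contra hc
    have h1 := hconst (b - a) (by omega)
    rw [show a + (b - a) = b by omega] at h1
    exact h h1.symm
  refine ⟨a + i0, by omega, hib, ?_, ?_⟩
  · intro k hk1 hk2
    have := hconst (k - a) (by omega)
    rwa [show a + (k - a) = k by omega] at this
  · rw [hconst i0 le_rfl]
    exact hi0

lemma exists_last_change {α : Type*} (g : ℕ → α) (a b : ℕ) (hab : a ≤ b) (h : g a ≠ g b) :
    ∃ j, a ≤ j ∧ j < b ∧ (∀ k, j < k → k ≤ b → g k = g b) ∧ g (j + 1) ≠ g j := by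
  obtain ⟨i, hi1, hi2, hic, hichg⟩ := exists_first_change (fun k => g (a + b - k)) a b hab
    (by
      simp only [show a + b - a = b by omega, show a + b - b = a by omega]
      exact h.symm)
  refine ⟨a + b - i - 1, by omega, by omega, ?_, ?_⟩
  · intro k hk1 hk2
    have := hic (a + b - k) (by omega) (by omega)
    simp only [show a + b - (a + b - k) = k by omega, show a + b - a = b by omega] at this
    exact this
  · have hichg' : g (a + b - (i + 1)) ≠ g (a + b - i) := hichg
    rw [show a + b - i - 1 + 1 = a + b - i by omega, show a + b - i - 1 = a + b - (i + 1) by omega]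
    exact fun hc => hichg' hc.symm

lemma main_lemma : ∀ n : ℕ, ∀ (f : ℕ → Fin n → Fin 3) (a b : ℕ) (p q : Fin 3),
    p ≠ q → a ≤ b → f a = (fun _ => p) → f b = (fun _ => q) →
    (∀ i, a ≤ i → i < b → f (i + 1) = f i ∨ DMove (f i) (f (i + 1))) →
    bseq n ≤ movesIn f a b := by
  intro n
  induction n using Nat.strong_induction_on with
  | _ n ih =>
    rcases n with _ | _ | n
    · intro f a b p q _ _ _ _ _
      simp [bseq]
    · -- n = 1
      intro f a b p q hpq hab h0 hb _
      have hne : f a ≠ f b := by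
        rw [h0, hb]
        intro hc
        exact hpq (congrFun hc ⟨0, by omega⟩)
      obtain ⟨i, hi1, hi2, _, hichg⟩ := exists_first_change f a b hab hne
      have hmem : i ∈ (Finset.Ico a b).filter (fun l => f (l + 1) ≠ f l) :=
        Finset.mem_filter.mpr ⟨Finset.mem_Ico.mpr ⟨hi1, hi2⟩, hichg⟩
      have : 0 < movesIn f a b := Finset.card_pos.mpr ⟨i, hmem⟩
      simpa [bseq] using (show 1 ≤ movesIn f a b from this)
    · -- n + 2
      intro f a b p q hpq hab h0 hb hstep
      have hkn : (n : ℕ) ≤ n + 2 := by omega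
      set D : Fin (n + 2) := ⟨n + 1, by omega⟩ with hDdef
      set E : Fin (n + 2) := ⟨n, by omega⟩ with hEdef
      have hED : E < D := by rw [Fin.lt_def]; simp [hDdef, hEdef]
      have hEneD : E ≠ D := by
        intro hc
        have : (E : ℕ) = (D : ℕ) := by rw [hc]
        simp [hDdef, hEdef] at this
      have hfaD : f a D = p := by rw [h0]
      have hfbD : f b D = q := by rw [hb]
      have hDab : (fun k => f k D) a ≠ (fun k => f k D) b := by
        simp only [hfaD, hfbD]
        exact hpq
      obtain ⟨i, hai, hib, hiconst, hichg0⟩ :=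
        exists_first_change (fun k => f k D) a b hab hDab
      obtain ⟨j, haj, hjb, hjconst, hjchg0⟩ :=
        exists_last_change (fun k => f k D) a b hab hDab
      have hichg : f (i + 1) D ≠ f i D := hichg0
      have hjchg : f (j + 1) D ≠ f j D := hjchg0
      have hfiD : f i D = p := by
        have := hiconst i hai le_rfl
        simpa [hfaD] using this
      have hfj1D : f (j + 1) D = q := by
        have := hjconst (j + 1) (by omega) (by omega)
        simpa [hfbD] using this
      have hij : i ≤ j := by
        by_contra hc
        push_neg at hc
        have h1 : f j D = p := by
          have := hiconst j haj (by omega)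
          simpa [hfaD] using this
        have h2 : f (j + 1) D = p := by
          have := hiconst (j + 1) (by omega) (by omega)
          simpa [hfaD] using this
        exact hjchg (by rw [h1, h2])
      -- analyze move at step i
      have hstepi := hstep i hai hib
      rcases hstepi with heq | hmvi
      · exact absurd (by rw [heq]) hichg
      obtain ⟨di, hXYi, hothi, hsmi, _⟩ := hmvi
      have hdiD : di = D := by
        by_contra hne
        exact hichg (hothi D (fun hcc => hne hcc.symm))
      subst hdiD
      -- all small discs at time i are on peg r
      set r : Fin 3 := f i E with hrdef
      have hrp : r ≠ p := by
        have := (hsmi E hED).1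
        rwa [hfiD] at this
      have hrq' : r ≠ f (i + 1) D := (hsmi E hED).2
      have hsmalls_i : ∀ e : Fin (n + 2), e < D → f i e = r := by
        intro e he
        have h1 := hsmi e he
        rw [hfiD] at h1
        exact third_eq p (f (i + 1) D) (f i e) r
          (fun hc => hichg (hc.symm.trans hfiD.symm))
          h1.1 h1.2 hrp hrq'
      -- analyze move at step j
      have hstepj := hstep j haj hjb
      rcases hstepj with heqj | hmvj
      · exact absurd (by rw [heqj]) hjchg
      obtain ⟨dj, hXYj, hothj, hsmj, _⟩ := hmvj
      have hdjD : dj = D := by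
        by_contra hne
        exact hjchg (hothj D (fun hcc => hne hcc.symm))
      subst hdjD
      set r' : Fin 3 := f j E with hr'def
      have hr'q : r' ≠ q := by
        have := (hsmj E hED).2
        rwa [hfj1D] at this
      have hr'p'' : r' ≠ f j D := (hsmj E hED).1
      have hsmalls_j : ∀ e : Fin (n + 2), e < D → f j e = r' := by
        intro e he
        have h1 := hsmj e he
        rw [hfj1D] at h1
        exact third_eq (f j D) q (f j e) r'
          (fun hc => hjchg (hfj1D.trans hc.symm))
          h1.1 h1.2 hr'p'' hr'q
      -- the restricted sequence
      set g : ℕ → Fin n → Fin 3 := fun k (e : Fin n) => f k (Fin.castLE hkn e) with hgdef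
      have hcastD : ∀ e : Fin n, Fin.castLE hkn e < D := by
        intro e
        rw [Fin.lt_def]
        simp [hDdef]
      have hcastne : ∀ e : Fin n, Fin.castLE hkn e ≠ D := by
        intro e hc
        have : ((Fin.castLE hkn e : Fin (n + 2)) : ℕ) = (D : ℕ) := by rw [hc]
        simp [hDdef] at this
        omega
      have hcastneE : ∀ e : Fin n, Fin.castLE hkn e ≠ E := by
        intro e hc
        have : ((Fin.castLE hkn e : Fin (n + 2)) : ℕ) = (E : ℕ) := by rw [hc]
        simp [hEdef] at this
        omega
      have hg_a : g a = (fun _ => p) := by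
        funext e
        simp [hgdef, h0]
      have hg_b : g b = (fun _ => q) := by
        funext e
        simp [hgdef, hb]
      have hg_i : g i = (fun _ => r) := by
        funext e
        exact hsmalls_i _ (hcastD e)
      have hg_j1 : g (j + 1) = (fun _ => r') := by
        funext e
        have h1 : f (j + 1) (Fin.castLE hkn e) = f j (Fin.castLE hkn e) :=
          hothj _ (hcastne e)
        rw [hgdef]
        simp only []
        rw [h1]
        exact hsmalls_j _ (hcastD e)
      have hgstep : ∀ l, a ≤ l → l < b → g (l + 1) = g l ∨ DMove (g l) (g (l + 1)) := by
        intro l h1 h2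
        rcases hstep l h1 h2 with he | hm
        · left
          funext e
          simp [hgdef, he]
        · exact hm.restrict hkn
      -- first inductive application : [a, i)
      have IH1 : bseq n ≤ movesIn g a i :=
        ih n (by omega) g a i p r (Ne.symm hrp) hai hg_a hg_i
          (fun l hl1 hl2 => hgstep l hl1 (by omega))
      have IH1' : bseq n ≤ movesIn f a i :=
        le_trans IH1 (movesIn_restrict_le hkn f a i)
      -- second inductive application : [j+1, b)
      have IH2 : bseq n ≤ movesIn g (j + 1) b :=
        ih n (by omega) g (j + 1) b r' q hr'q (by omega) hg_j1 hg_b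
          (fun l hl1 hl2 => hgstep l (by omega) hl2)
      have hfi_ne : f (i + 1) ≠ f i := fun hc => hichg (by rw [hc])
      have hfj_ne : f (j + 1) ≠ f j := fun hc => hjchg (by rw [hc])
      have hbseq : bseq (n + 1 + 1) = 2 * bseq n + 2 := rfl
      rw [hbseq]
      rcases eq_or_lt_of_le hij with rfl | hlt
      · -- case i = j : the largest disc moves exactly once
        have hq'q : f (i + 1) D = q := hfj1D
        have hrq : r ≠ q := by rwa [hq'q] at hrq'
        have hfi1E : f (i + 1) E = r := by
          rw [hothi E hEneD]
        have hfbE : f b E = q := by rw [hb]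
        have hEne : (fun k => f k E) (i + 1) ≠ (fun k => f k E) b := by
          simp only [hfi1E, hfbE]
          exact hrq
        obtain ⟨k, hk1, hk2, _, hkchg0⟩ :=
          exists_first_change (fun k => f k E) (i + 1) b (by omega) hEne
        have hkchg : f (k + 1) E ≠ f k E := hkchg0
        -- move at step k has mover E, so g does not move there
        have hstepk := hstep k (by omega) hk2
        rcases hstepk with heqk | hmvk
        · exact absurd (by rw [heqk]) hkchg
        obtain ⟨dk, hXYk, hothk, _, _⟩ := hmvk
        have hdkE : dk = E := by
          by_contra hne
          exact hkchg (hothk E (fun hcc => hne hcc.symm))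
        subst hdkE
        have hgk : (fun e : Fin n => f (k + 1) (Fin.castLE hkn e)) =
            (fun e : Fin n => f k (Fin.castLE hkn e)) := by
          funext e
          exact hothk _ (hcastneE e)
        have hfk_ne : f (k + 1) ≠ f k := fun hc => hkchg (by rw [hc])
        -- strict inequality on [i+1, b)
        have hmemk : k ∈ (Finset.Ico (i + 1) b).filter (fun l => f (l + 1) ≠ f l) :=
          Finset.mem_filter.mpr ⟨Finset.mem_Ico.mpr ⟨hk1, hk2⟩, hfk_ne⟩
        have hnmemk : k ∉ (Finset.Ico (i + 1) b).filter
            (fun l => g (l + 1) ≠ g l) := by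
          rw [Finset.mem_filter]
          rintro ⟨_, hcc⟩
          exact hcc hgk
        have hsub := restrict_filter_subset hkn f (i + 1) b
        have hstrict : movesIn g (i + 1) b < movesIn f (i + 1) b := by
          apply Finset.card_lt_card
          rw [Finset.ssubset_iff_of_subset hsub]
          exact ⟨k, hmemk, hnmemk⟩
        have h1 : movesIn f a b = movesIn f a i + movesIn f i (i + 1) + movesIn f (i + 1) b := by
          rw [movesIn_add f hai (show i ≤ b by omega),
            movesIn_add f (show i ≤ i + 1 by omega) (show i + 1 ≤ b by omega)]
          ring
        have h2 : 1 ≤ movesIn f i (i + 1) := movesIn_one f i hfi_ne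
        omega
      · -- case i < j : the largest disc moves at least twice
        have h1 : movesIn f a b = movesIn f a i + movesIn f i (i + 1) +
            movesIn f (i + 1) j + movesIn f j (j + 1) + movesIn f (j + 1) b := by
          rw [movesIn_add f hai (show i ≤ b by omega),
            movesIn_add f (show i ≤ i + 1 by omega) (show i + 1 ≤ b by omega),
            movesIn_add f (show i + 1 ≤ j by omega) (show j ≤ b by omega),
            movesIn_add f (show j ≤ j + 1 by omega) (show j + 1 ≤ b by omega)]
          ring
        have h2 : 1 ≤ movesIn f i (i + 1) := movesIn_one f i hfi_ne
        have h3 : 1 ≤ movesIn f j (j + 1) := movesIn_one f j hfj_ne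
        have IH2' : bseq n ≤ movesIn f (j + 1) b :=
          le_trans IH2 (movesIn_restrict_le hkn f (j + 1) b)
        omega

/-- Theorem 4.2: any legal transfer (in the distance-1 model) of all `n` discs from one peg
to another takes at least `b n` moves. -/
theorem distance_one_lower_bound (n m : ℕ) (p q : Fin 3) (hpq : p ≠ q)
    (f : ℕ → (Fin n → Fin 3))
    (h0 : f 0 = fun _ => p) (hm : f m = fun _ => q)
    (hmove : ∀ i, i < m → DMove (f i) (f (i + 1))) :
    bseq n ≤ m := by
  have h := main_lemma n f 0 m p q hpq (Nat.zero_le m) h0 hm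
    (fun i _ hi => Or.inr (hmove i hi))
  calc bseq n ≤ movesIn f 0 m := h
    _ ≤ m - 0 := movesIn_le f 0 m
    _ = m := by omega
end

section
/- Let G be a strongly connected directed graph on vertex set {1,2,3}. Define M(i,j,0) = 0 and, for n ≥ 1 with k = 6−i−j: M(i,j,n) = M(i,k,n−1) + M(k,j,n−1) + 1 if (i,j) ∈ E, and M(i,j,n) = 2·M(i,j,n−1) + M(j,i,n−1) + 2 otherwise. Then M(i,j,n) is nondecreasing in n: M(i,j,n−1) ≤ M(i,j,n) for all n ≥ 1 and all i ≠ j. -/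
/-!
Induction on `n`: both recurrences express `M i j (n + 1)` as a monotone expression in values
`M a b n` with `a ≠ b`, so the step `M · · n ≤ M · · (n + 1)` propagates from `n` to `n + 1`;
the base case is `M i j 0 = 0`.
-/

section Recurrence

variable {α : Type*} {S : Set α} {third : α → α → α} {E : α → α → Prop} {M : α → α → ℕ → ℕ}

theorem le_succ_of_hanoi_recurrence
    (hthird : ∀ i ∈ S, ∀ j ∈ S, i ≠ j → third i j ∈ S ∧ i ≠ third i j ∧ third i j ≠ j)
    (h0 : ∀ i j, M i j 0 = 0)
    (hrecE : ∀ i ∈ S, ∀ j ∈ S, i ≠ j → ∀ n, E i j →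
      M i j (n + 1) = M i (third i j) n + M (third i j) j n + 1)
    (hrecN : ∀ i ∈ S, ∀ j ∈ S, i ≠ j → ∀ n, ¬ E i j →
      M i j (n + 1) = 2 * M i j n + M j i n + 2) :
    ∀ n, ∀ i ∈ S, ∀ j ∈ S, i ≠ j → M i j n ≤ M i j (n + 1) := by
  intro n
  induction n with
  | zero => intro i _ j _ _; simp [h0]
  | succ n ih =>
    intro i hi j hj hij
    by_cases hE : E i j
    · obtain ⟨hk, hik, hkj⟩ := hthird i hi j hj hij
      rw [hrecE i hi j hj hij _ hE, hrecE i hi j hj hij _ hE]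
      have := ih i hi _ hk hik
      have := ih _ hk j hj hkj
      omega
    · rw [hrecN i hi j hj hij _ hE, hrecN i hi j hj hij _ hE]
      have := ih i hi j hj hij
      have := ih j hj i hi hij.symm
      omega

end Recurrence

theorem third_peg_spec {i j : ℕ} (hi : i ∈ ({1, 2, 3} : Set ℕ)) (hj : j ∈ ({1, 2, 3} : Set ℕ))
    (hij : i ≠ j) : 6 - i - j ∈ ({1, 2, 3} : Set ℕ) ∧ i ≠ 6 - i - j ∧ 6 - i - j ≠ j := by
  simp only [Set.mem_insert_iff, Set.mem_singleton_iff] at hi hj ⊢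
  omega

theorem M_monotone_general (E : ℕ → ℕ → Prop)
    (M : ℕ → ℕ → ℕ → ℕ)
    (h0 : ∀ i j, M i j 0 = 0)
    (hrecE : ∀ i j n, i ∈ ({1, 2, 3} : Set ℕ) → j ∈ ({1, 2, 3} : Set ℕ) → i ≠ j → 1 ≤ n →
      E i j → M i j n = M i (6 - i - j) (n - 1) + M (6 - i - j) j (n - 1) + 1)
    (hrecN : ∀ i j n, i ∈ ({1, 2, 3} : Set ℕ) → j ∈ ({1, 2, 3} : Set ℕ) → i ≠ j → 1 ≤ n →
      ¬ E i j → M i j n = 2 * M i j (n - 1) + M j i (n - 1) + 2) :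
    ∀ i j n, i ∈ ({1, 2, 3} : Set ℕ) → j ∈ ({1, 2, 3} : Set ℕ) → i ≠ j → 1 ≤ n →
      M i j (n - 1) ≤ M i j n := by
  intro i j n hi hj hij hn
  obtain ⟨m, rfl⟩ := Nat.exists_eq_add_of_le' hn
  exact le_succ_of_hanoi_recurrence (E := E) (fun _ hi _ hj hij => third_peg_spec hi hj hij) h0
    (fun i hi j hj hij m hE => hrecE i j (m + 1) hi hj hij m.succ_pos hE)
    (fun i hi j hj hij m hE => hrecN i j (m + 1) hi hj hij m.succ_pos hE) m i hi j hj hij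

/-- For a strongly connected digraph `E` on the pegs `{1,2,3}`, the function `M` defined by
the `DirectedMove` recurrence is nondecreasing in the number of discs. -/
theorem M_monotone (E : ℕ → ℕ → Prop)
    (hconn : ∀ i j, i ∈ ({1, 2, 3} : Set ℕ) → j ∈ ({1, 2, 3} : Set ℕ) →
      Relation.ReflTransGen
        (fun a b => a ∈ ({1, 2, 3} : Set ℕ) ∧ b ∈ ({1, 2, 3} : Set ℕ) ∧ E a b) i j)
    (M : ℕ → ℕ → ℕ → ℕ)
    (h0 : ∀ i j, M i j 0 = 0)
    (hrecE : ∀ i j n, i ∈ ({1, 2, 3} : Set ℕ) → j ∈ ({1, 2, 3} : Set ℕ) → i ≠ j → 1 ≤ n →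
      E i j → M i j n = M i (6 - i - j) (n - 1) + M (6 - i - j) j (n - 1) + 1)
    (hrecN : ∀ i j n, i ∈ ({1, 2, 3} : Set ℕ) → j ∈ ({1, 2, 3} : Set ℕ) → i ≠ j → 1 ≤ n →
      ¬ E i j → M i j n = 2 * M i j (n - 1) + M j i (n - 1) + 2) :
    ∀ i j n, i ∈ ({1, 2, 3} : Set ℕ) → j ∈ ({1, 2, 3} : Set ℕ) → i ≠ j → 1 ≤ n →
      M i j (n - 1) ≤ M i j n :=
  M_monotone_general E M h0 hrecE hrecN
end

section
/- Let G be a strongly connected directed graph on {1,2,3} with (i,j) ∈ E, (i,k) ∈ E, (k,j) ∈ E where k = 6−i−j, and let M be defined by the DirectedMove recurrence. Then for all n ≥ 2, M(i,k,n−1) + M(k,j,n−1) + 1 ≤ 2·M(i,j,n−1) + M(j,i,n−1) + 2. -/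
/-! Write `z = 6 - x - y` for the third peg. By the recurrence, `M x y (n + 1)` is one of
`A = M x z n + M z y n + 1` and `B = 2 * M x y n + M y x n + 2`, so once `A ≤ B` at level `n` it lies
between them. The inequality `A ≤ B` then propagates from level `n` to `n + 1`: bound `M x z (n + 1)`
and `M z y (n + 1)` from above by their `B`-values, and regroup the sum as
`2 * (M x z n + M z y n + 1) + (M y z n + M z x n + 1) + 2`, whose two brackets are the lower bounds
for `M x y (n + 1)` and `M y x (n + 1)`. -/

section ThirdPeg

variable {x y : ℕ}

lemma six_sub_sub_mem (hx : x ∈ ({1, 2, 3} : Set ℕ)) (hy : y ∈ ({1, 2, 3} : Set ℕ))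
    (hxy : x ≠ y) : 6 - x - y ∈ ({1, 2, 3} : Set ℕ) := by
  simp only [Set.mem_insert_iff, Set.mem_singleton_iff] at hx hy ⊢
  omega

lemma ne_six_sub_sub (hx : x ∈ ({1, 2, 3} : Set ℕ)) (hy : y ∈ ({1, 2, 3} : Set ℕ))
    (hxy : x ≠ y) : x ≠ 6 - x - y := by
  simp only [Set.mem_insert_iff, Set.mem_singleton_iff] at hx hy
  omega

lemma six_sub_sub_ne (hx : x ∈ ({1, 2, 3} : Set ℕ)) (hy : y ∈ ({1, 2, 3} : Set ℕ))
    (hxy : x ≠ y) : 6 - x - y ≠ y := by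
  simp only [Set.mem_insert_iff, Set.mem_singleton_iff] at hx hy
  omega

lemma six_sub_sub_six_sub_sub (h : x + y ≤ 6) : 6 - x - (6 - x - y) = y := by
  omega

lemma six_sub_six_sub_sub_sub (h : x + y ≤ 6) : 6 - (6 - x - y) - y = x := by
  omega

lemma six_sub_sub_comm : 6 - y - x = 6 - x - y := by
  omega

lemma add_le_six (hx : x ∈ ({1, 2, 3} : Set ℕ)) (hy : y ∈ ({1, 2, 3} : Set ℕ)) : x + y ≤ 6 := by
  simp only [Set.mem_insert_iff, Set.mem_singleton_iff] at hx hy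
  omega

end ThirdPeg

section Recurrence

variable {E : ℕ → ℕ → Prop} {M : ℕ → ℕ → ℕ → ℕ}
  (hrecE : ∀ i j n, i ∈ ({1, 2, 3} : Set ℕ) → j ∈ ({1, 2, 3} : Set ℕ) → i ≠ j → 1 ≤ n →
      E i j → M i j n = M i (6 - i - j) (n - 1) + M (6 - i - j) j (n - 1) + 1)
  (hrecN : ∀ i j n, i ∈ ({1, 2, 3} : Set ℕ) → j ∈ ({1, 2, 3} : Set ℕ) → i ≠ j → 1 ≤ n →
      ¬ E i j → M i j n = 2 * M i j (n - 1) + M j i (n - 1) + 2)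
include hrecE hrecN

lemma M_succ_eq_or {x y : ℕ} (hx : x ∈ ({1, 2, 3} : Set ℕ)) (hy : y ∈ ({1, 2, 3} : Set ℕ))
    (hxy : x ≠ y) (n : ℕ) :
    M x y (n + 1) = M x (6 - x - y) n + M (6 - x - y) y n + 1 ∨
      M x y (n + 1) = 2 * M x y n + M y x n + 2 := by
  by_cases h : E x y
  · exact .inl (hrecE x y (n + 1) hx hy hxy n.succ_pos h)
  · exact .inr (hrecN x y (n + 1) hx hy hxy n.succ_pos h)

lemma M_succ_bounds {x y n : ℕ} (hx : x ∈ ({1, 2, 3} : Set ℕ)) (hy : y ∈ ({1, 2, 3} : Set ℕ))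
    (hxy : x ≠ y)
    (hn : M x (6 - x - y) n + M (6 - x - y) y n + 1 ≤ 2 * M x y n + M y x n + 2) :
    M x (6 - x - y) n + M (6 - x - y) y n + 1 ≤ M x y (n + 1) ∧
      M x y (n + 1) ≤ 2 * M x y n + M y x n + 2 := by
  rcases M_succ_eq_or hrecE hrecN hx hy hxy n with h | h <;> omega

lemma M_detour_le (h0 : ∀ i j, M i j 0 = 0) (n : ℕ) {x y : ℕ}
    (hx : x ∈ ({1, 2, 3} : Set ℕ)) (hy : y ∈ ({1, 2, 3} : Set ℕ)) (hxy : x ≠ y) :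
    M x (6 - x - y) n + M (6 - x - y) y n + 1 ≤ 2 * M x y n + M y x n + 2 := by
  induction n generalizing x y with
  | zero => simp [h0]
  | succ n ih =>
    have hz := six_sub_sub_mem hx hy hxy
    have hxz := ne_six_sub_sub hx hy hxy
    have hzy := six_sub_sub_ne hx hy hxy
    have hsum := add_le_six hx hy
    have bounds_xz := M_succ_bounds hrecE hrecN hx hz hxz (ih hx hz hxz)
    have bounds_zy := M_succ_bounds hrecE hrecN hz hy hzy (ih hz hy hzy)
    have bounds_xy := M_succ_bounds hrecE hrecN hx hy hxy (ih hx hy hxy)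
    have bounds_yx := M_succ_bounds hrecE hrecN hy hx hxy.symm (ih hy hx hxy.symm)
    rw [six_sub_sub_six_sub_sub hsum] at bounds_xz
    rw [six_sub_six_sub_sub_sub hsum] at bounds_zy
    rw [six_sub_sub_comm] at bounds_yx
    omega

end Recurrence

theorem M_key_inequality_general (E : ℕ → ℕ → Prop)
    (M : ℕ → ℕ → ℕ → ℕ)
    (h0 : ∀ i j, M i j 0 = 0)
    (hrecE : ∀ i j n, i ∈ ({1, 2, 3} : Set ℕ) → j ∈ ({1, 2, 3} : Set ℕ) → i ≠ j → 1 ≤ n →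
      E i j → M i j n = M i (6 - i - j) (n - 1) + M (6 - i - j) j (n - 1) + 1)
    (hrecN : ∀ i j n, i ∈ ({1, 2, 3} : Set ℕ) → j ∈ ({1, 2, 3} : Set ℕ) → i ≠ j → 1 ≤ n →
      ¬ E i j → M i j n = 2 * M i j (n - 1) + M j i (n - 1) + 2)
    (i j k : ℕ) (hi : i ∈ ({1, 2, 3} : Set ℕ)) (hj : j ∈ ({1, 2, 3} : Set ℕ))
    (hij : i ≠ j) (hk : k = 6 - i - j) :
    ∀ n, 2 ≤ n →
      M i k (n - 1) + M k j (n - 1) + 1 ≤ 2 * M i j (n - 1) + M j i (n - 1) + 2 := by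
  subst hk
  intro n _
  exact M_detour_le hrecE hrecN h0 (n - 1) hi hj hij

/-- If `(i,j), (i,k), (k,j) ∈ E` with `k = 6-i-j`, then for all `n ≥ 2`,
`M(i,k,n-1) + M(k,j,n-1) + 1 ≤ 2·M(i,j,n-1) + M(j,i,n-1) + 2`. -/
theorem M_key_inequality (E : ℕ → ℕ → Prop)
    (hconn : ∀ i j, i ∈ ({1, 2, 3} : Set ℕ) → j ∈ ({1, 2, 3} : Set ℕ) →
      Relation.ReflTransGen
        (fun a b => a ∈ ({1, 2, 3} : Set ℕ) ∧ b ∈ ({1, 2, 3} : Set ℕ) ∧ E a b) i j)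
    (M : ℕ → ℕ → ℕ → ℕ)
    (h0 : ∀ i j, M i j 0 = 0)
    (hrecE : ∀ i j n, i ∈ ({1, 2, 3} : Set ℕ) → j ∈ ({1, 2, 3} : Set ℕ) → i ≠ j → 1 ≤ n →
      E i j → M i j n = M i (6 - i - j) (n - 1) + M (6 - i - j) j (n - 1) + 1)
    (hrecN : ∀ i j n, i ∈ ({1, 2, 3} : Set ℕ) → j ∈ ({1, 2, 3} : Set ℕ) → i ≠ j → 1 ≤ n →
      ¬ E i j → M i j n = 2 * M i j (n - 1) + M j i (n - 1) + 2)
    (i j k : ℕ) (hi : i ∈ ({1, 2, 3} : Set ℕ)) (hj : j ∈ ({1, 2, 3} : Set ℕ))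
    (hij : i ≠ j) (hk : k = 6 - i - j)
    (hEij : E i j) (hEik : E i k) (hEkj : E k j) :
    ∀ n, 2 ≤ n →
      M i k (n - 1) + M k j (n - 1) + 1 ≤ 2 * M i j (n - 1) + M j i (n - 1) + 2 :=
  M_key_inequality_general E M h0 hrecE hrecN i j k hi hj hij hk
end
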